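/- The family {R^{(n,m)}} satisfies the second hexagon relation (id_n ⊗ φ_{m,l})(R^{(n,ml)}) = R^{(n,l)}_{13} R^{(n,m)}_{12} in M_n(ℂ) ⊗ M_m(ℂ) ⊗ M_l(ℂ), for all positive integers n, m, l. -/

import Mathlib

/-- The index map `(i,j) ↦ m·i + j : Fin n × Fin m → Fin (n*m)` (0-based form of
`(i,j) ↦ m(i-1)+j`); its inverse is `k ↦ (k div m, k mod m)`. -/
def pairIdx {n m : ℕ} (i : Fin n) (j : Fin m) : Fin (n * m) :=
  ⟨m * (i : ℕ) + (j : ℕ), by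
    have hi : (i : ℕ) + 1 ≤ n := i.2
    have hj : (j : ℕ) < m := j.2
    have h1 : m * (i : ℕ) + (j : ℕ) < m * ((i : ℕ) + 1) := by
      rw [Nat.mul_succ]; omega
    have h2 : m * ((i : ℕ) + 1) ≤ m * n := Nat.mul_le_mul le_rfl hi
    have h3 : m * n = n * m := Nat.mul_comm m n
    omega⟩


/-- `φ : M_{nm}(ℂ) → M_n(ℂ) ⊗ M_m(ℂ)` (Kronecker model `Matrix (Fin n × Fin m)`)
is the matrix-unit isomorphism `φ_{n,m}` iff
`φ(E^{(nm)}_{m(i-1)+j, m(i'-1)+j'}) = E^{(n)}_{i,i'} ⊗ E^{(m)}_{j,j'}`. -/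
def IsMatrixUnitHom (n m : ℕ)
    (φ : Matrix (Fin (n * m)) (Fin (n * m)) ℂ →⋆ₐ[ℂ]
      Matrix (Fin n × Fin m) (Fin n × Fin m) ℂ) : Prop :=
  ∀ (i i' : Fin n) (j j' : Fin m),
    φ (Matrix.single (pairIdx i j) (pairIdx i' j') 1) =
      Matrix.single (i, j) (i', j') 1

/-- The permutation unitary `R^{(n,m)} ∈ M_n(ℂ) ⊗ M_m(ℂ)` (Kronecker model):
`R^{(n,m)} e_i ⊗ e_j = e_{i'} ⊗ e_{j'}` where `m·i + j = n·j' + i'` (0-based),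
i.e. the `(p,q)` entry is `1` iff `p = σ_{n,m}(q)`. -/
def Rmat (n m : ℕ) : Matrix (Fin n × Fin m) (Fin n × Fin m) ℂ :=
  fun p q => if m * (q.1 : ℕ) + (q.2 : ℕ) = n * (p.2 : ℕ) + (p.1 : ℕ) then 1 else 0

/-- `id_α ⊗ φ` in the Kronecker model. -/
def idTensor {α β γ : Type*} (φ : Matrix β β ℂ → Matrix γ γ ℂ)
    (M : Matrix (α × β) (α × β) ℂ) : Matrix (α × γ) (α × γ) ℂ :=
  fun p q => φ (fun b b' => M (p.1, b) (q.1, b')) p.2 q.2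

/-- The leg `R^{(n,l)}_{13}` in `M_n ⊗ M_m ⊗ M_l` (Kronecker model,
indices `Fin n × (Fin m × Fin l)`). -/
def R13' (n m l : ℕ) : Matrix (Fin n × Fin m × Fin l) (Fin n × Fin m × Fin l) ℂ :=
  fun p q => Rmat n l (p.1, p.2.2) (q.1, q.2.2) * (if p.2.1 = q.2.1 then 1 else 0)

/-- The leg `R^{(n,m)}_{12}` in `M_n ⊗ M_m ⊗ M_l`. -/
def R12' (n m l : ℕ) : Matrix (Fin n × Fin m × Fin l) (Fin n × Fin m × Fin l) ℂ :=
  fun p q => Rmat n m (p.1, p.2.1) (q.1, q.2.1) * (if p.2.2 = q.2.2 then 1 else 0)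

/-! The index map `(i,j) ↦ m·i + j` is `finProdFinEquiv`, so `φ_{m,l}` is the reindexing along it,
and `R^{(n,m)}` is the permutation matrix of `σ_{n,m} = swap ∘ finProdFinEquiv⁻¹ ∘ finProdFinEquiv`.
The hexagon relation then reduces to the identity of index maps `σ_{n,ml} = (σ_{n,l})_{13} ∘ (σ_{n,m})_{12}`,
which is the linear relation `l·(m·a' + j') + k' = n·(l·j + k) + a` obtained from the two factors. -/

lemma pairIdx_eq_finProdFinEquiv {m l : ℕ} (i : Fin m) (j : Fin l) :
    pairIdx i j = finProdFinEquiv (i, j) :=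
  Fin.ext (Nat.add_comm _ _)

lemma IsMatrixUnitHom.apply_apply {m l : ℕ}
    {φ : Matrix (Fin (m * l)) (Fin (m * l)) ℂ →⋆ₐ[ℂ] Matrix (Fin m × Fin l) (Fin m × Fin l) ℂ}
    (hφ : IsMatrixUnitHom m l φ) (A : Matrix (Fin (m * l)) (Fin (m * l)) ℂ) (p q : Fin m × Fin l) :
    φ A p q = A (finProdFinEquiv p) (finProdFinEquiv q) := by
  induction A using Matrix.induction_on' with
  | h_zero => simp
  | h_add A B hA hB => simp [hA, hB]
  | h_std_basis x y c =>
    obtain ⟨x, rfl⟩ := finProdFinEquiv.surjective x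
    obtain ⟨y, rfl⟩ := finProdFinEquiv.surjective y
    have hunit : φ (Matrix.single (finProdFinEquiv x) (finProdFinEquiv y) 1) = Matrix.single x y 1 := by
      simpa only [pairIdx_eq_finProdFinEquiv] using hφ x.1 y.1 x.2 y.2
    have hsmul : Matrix.single (finProdFinEquiv x) (finProdFinEquiv y) c =
        c • Matrix.single (finProdFinEquiv x) (finProdFinEquiv y) 1 := by
      rw [Matrix.smul_single, smul_eq_mul, mul_one]
    rw [hsmul, map_smul, Matrix.smul_apply, hunit, Matrix.smul_apply,
      Matrix.single_apply, Matrix.single_apply]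
    simp [finProdFinEquiv.injective.eq_iff]

def Rperm (n m : ℕ) : Fin n × Fin m ≃ Fin n × Fin m :=
  finProdFinEquiv.trans ((finCongr (Nat.mul_comm n m)).trans
    (finProdFinEquiv.symm.trans (Equiv.prodComm _ _)))

lemma Rperm_eq_iff {n m : ℕ} {p q : Fin n × Fin m} :
    Rperm n m q = p ↔ m * (q.1 : ℕ) + q.2 = n * (p.2 : ℕ) + p.1 := by
  rw [Rperm, Equiv.trans_apply, Equiv.trans_apply, Equiv.trans_apply, ← Equiv.eq_symm_apply,
    Equiv.symm_apply_eq, Fin.ext_iff]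
  simp [Nat.add_comm]

lemma Rmat_apply {n m : ℕ} (p q : Fin n × Fin m) :
    Rmat n m p q = if Rperm n m q = p then 1 else 0 := by
  simp only [Rmat, Rperm_eq_iff]

section Legs

variable {α β γ : Type*}

def leg12 (σ : α × β → α × β) (x : α × β × γ) : α × β × γ :=
  ((σ (x.1, x.2.1)).1, (σ (x.1, x.2.1)).2, x.2.2)

def leg13 (σ : α × γ → α × γ) (x : α × β × γ) : α × β × γ :=
  ((σ (x.1, x.2.2)).1, x.2.1, (σ (x.1, x.2.2)).2)

end Legs

lemma R12'_apply {n m l : ℕ} (p q : Fin n × Fin m × Fin l) :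
    R12' n m l p q = if leg12 (Rperm n m) q = p then 1 else 0 := by
  obtain ⟨a, j, k⟩ := p
  obtain ⟨a', j', k'⟩ := q
  simp only [R12', Rmat_apply, leg12, Prod.ext_iff]
  split_ifs <;> simp_all

lemma R13'_apply {n m l : ℕ} (p q : Fin n × Fin m × Fin l) :
    R13' n m l p q = if leg13 (Rperm n l) q = p then 1 else 0 := by
  obtain ⟨a, j, k⟩ := p
  obtain ⟨a', j', k'⟩ := q
  simp only [R13', Rmat_apply, leg13, Prod.ext_iff]
  split_ifs <;> simp_all

lemma R13'_mul_R12'_apply {n m l : ℕ} (p q : Fin n × Fin m × Fin l) :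
    (R13' n m l * R12' n m l) p q =
      if leg13 (Rperm n l) (leg12 (Rperm n m) q) = p then 1 else 0 := by
  simp only [Matrix.mul_apply, R13'_apply, R12'_apply, mul_ite, mul_one, mul_zero,
    Finset.sum_ite_eq, Finset.mem_univ, if_true]

lemma Rperm_hexagon (n m l : ℕ) (x : Fin n × Fin m × Fin l) :
    Rperm n (m * l) (Prod.map id finProdFinEquiv x) =
      Prod.map id finProdFinEquiv (leg13 (Rperm n l) (leg12 (Rperm n m) x)) := by
  have h12 := Rperm_eq_iff.mp (rfl : Rperm n m (x.1, x.2.1) = _)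
  set y := Rperm n m (x.1, x.2.1)
  have h13 := Rperm_eq_iff.mp (rfl : Rperm n l (y.1, x.2.2) = _)
  rw [Rperm_eq_iff]
  simp only [Prod.map, id, leg12, leg13, finProdFinEquiv_apply_val] at h13 ⊢
  linear_combination l * h12 + h13

theorem Rmat_hexagon_two_general (n m l : ℕ)
    (φml : Matrix (Fin (m * l)) (Fin (m * l)) ℂ →⋆ₐ[ℂ]
      Matrix (Fin m × Fin l) (Fin m × Fin l) ℂ)
    (hφml : IsMatrixUnitHom m l φml) :
    idTensor (⇑φml) (Rmat n (m * l)) = R13' n m l * R12' n m l := by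
  ext p q
  have hinj : Function.Injective (Prod.map id finProdFinEquiv : Fin n × Fin m × Fin l → _) :=
    Function.injective_id.prodMap finProdFinEquiv.injective
  refine (hφml.apply_apply _ p.2 q.2).trans ?_
  simp only [Rmat_apply, R13'_mul_R12'_apply]
  exact if_congr (by rw [← hinj.eq_iff, ← Rperm_hexagon]; rfl) rfl rfl

/-- The second hexagon relation
`(id_n ⊗ φ_{m,l})(R^{(n,ml)}) = R^{(n,l)}_{13} R^{(n,m)}_{12}`
in `M_n(ℂ) ⊗ M_m(ℂ) ⊗ M_l(ℂ)` (Kronecker model). -/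
theorem Rmat_hexagon_two (n m l : ℕ) (hn : 0 < n) (hm : 0 < m) (hl : 0 < l)
    (φml : Matrix (Fin (m * l)) (Fin (m * l)) ℂ →⋆ₐ[ℂ]
      Matrix (Fin m × Fin l) (Fin m × Fin l) ℂ)
    (hφml : IsMatrixUnitHom m l φml) :
    idTensor (⇑φml) (Rmat n (m * l)) = R13' n m l * R12' n m l :=
  Rmat_hexagon_two_general n m l φml hφml
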